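/- arXiv:2309.09050 — 3 statements merged into one kernel-verified Lean document; each statement's English description precedes it below -/
import Mathlib

section
/- Let C ∈ ℝ^{p×p} be symmetric, E ∈ ℝ^{p×m}, G ∈ ℝ^{n×p}, and let F̄ ∈ ℝ^{n×n} be symmetric positive semidefinite. If there exists a scalar λ > 0 such that C + λ E Eᵀ + λ⁻¹ Gᵀ F̄ G ⪯ 0, then for every matrix F ∈ ℝ^{m×n} with Fᵀ F ⪯ F̄ one has C + E F G + Gᵀ Fᵀ Eᵀ ⪯ 0. -/
/-! Completing the square, `E B + (E B)ᴴ = λ E Eᴴ + λ⁻¹ Bᴴ B - λ⁻¹ (λ E - Bᴴ)(λ E - Bᴴ)ᴴ`,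
bounds the perturbation with `B = F G` by `λ E Eᴴ + λ⁻¹ Gᴴ (Fᴴ F) G`, and congruence by `G`
turns `Fᴴ F ⪯ F̄` into `Gᴴ Fᴴ F G ⪯ Gᴴ F̄ G`. -/

open Matrix
open scoped MatrixOrder ComplexOrder

namespace Matrix

variable {𝕜 l m n : Type*} [RCLike 𝕜] [Fintype l] [Fintype m] [Fintype n]

theorem conjTranspose_mul_mul_le_conjTranspose_mul_mul {A B : Matrix n n 𝕜} (hAB : A ≤ B)
    (G : Matrix n l 𝕜) : Gᴴ * A * G ≤ Gᴴ * B * G := by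
  rw [le_iff, ← Matrix.sub_mul, ← Matrix.mul_sub]
  exact (le_iff.mp hAB).conjTranspose_mul_mul_same G

theorem mul_add_conjTranspose_le (E : Matrix l m 𝕜) (B : Matrix m l 𝕜) {t : ℝ} (ht : 0 < t) :
    E * B + (E * B)ᴴ ≤ t • (E * Eᴴ) + t⁻¹ • (Bᴴ * B) := by
  have hsq : t • (E * Eᴴ) + t⁻¹ • (Bᴴ * B) - (E * B + (E * B)ᴴ) =
      t⁻¹ • ((t • E - Bᴴ) * (t • E - Bᴴ)ᴴ) := by
    simp only [conjTranspose_sub, conjTranspose_smul, conjTranspose_conjTranspose,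
      conjTranspose_mul, star_trivial, Matrix.sub_mul, Matrix.mul_sub, Matrix.smul_mul,
      Matrix.mul_smul, smul_sub, smul_smul, inv_mul_cancel₀ ht.ne', one_smul]
    rw [show t⁻¹ * (t * t) = t by field_simp]
    abel
  rw [le_iff, hsq]
  exact (posSemidef_self_mul_conjTranspose _).smul (inv_nonneg.2 ht.le)

theorem add_mul_mul_add_conjTranspose_nonpos {C : Matrix l l 𝕜} {E : Matrix l m 𝕜}
    {F : Matrix m n 𝕜} {G : Matrix n l 𝕜} {Fbar : Matrix n n 𝕜} {t : ℝ} (ht : 0 < t)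
    (hF : Fᴴ * F ≤ Fbar) (h : C + t • (E * Eᴴ) + t⁻¹ • (Gᴴ * Fbar * G) ≤ 0) :
    C + E * F * G + Gᴴ * Fᴴ * Eᴴ ≤ 0 :=
  calc C + E * F * G + Gᴴ * Fᴴ * Eᴴ = C + (E * (F * G) + (E * (F * G))ᴴ) := by
        simp only [conjTranspose_mul, Matrix.mul_assoc, add_assoc]
    _ ≤ C + (t • (E * Eᴴ) + t⁻¹ • ((F * G)ᴴ * (F * G))) := by
        grw [mul_add_conjTranspose_le E (F * G) ht]
    _ = C + (t • (E * Eᴴ) + t⁻¹ • (Gᴴ * (Fᴴ * F) * G)) := by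
        simp only [conjTranspose_mul, Matrix.mul_assoc]
    _ ≤ C + (t • (E * Eᴴ) + t⁻¹ • (Gᴴ * Fbar * G)) := by
        grw [conjTranspose_mul_mul_le_conjTranspose_mul_mul hF G]
    _ ≤ 0 := by rwa [← add_assoc]

end Matrix

theorem uncertainty_removal_general {p m n : ℕ}
    (C : Matrix (Fin p) (Fin p) ℝ)
    (E : Matrix (Fin p) (Fin m) ℝ) (G : Matrix (Fin n) (Fin p) ℝ)
    (Fbar : Matrix (Fin n) (Fin n) ℝ)
    (lam : ℝ) (hlam : 0 < lam)
    (h : (-(C + lam • (E * Eᵀ) + lam⁻¹ • (Gᵀ * Fbar * G))).PosSemidef) :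
    ∀ F : Matrix (Fin m) (Fin n) ℝ, (Fbar - Fᵀ * F).PosSemidef →
      (-(C + E * F * G + Gᵀ * Fᵀ * Eᵀ)).PosSemidef := by
  intro F hF
  simp only [← conjTranspose_eq_transpose_of_trivial] at h hF ⊢
  rw [← zero_sub] at h ⊢
  exact add_mul_mul_add_conjTranspose_nonpos hlam hF h

/-- Lemma 2 of the paper: if there is `λ > 0` with
`C + λ E Eᵀ + λ⁻¹ Gᵀ F̄ G ⪯ 0`, then `C + E F G + Gᵀ Fᵀ Eᵀ ⪯ 0`
for every `F` with `Fᵀ F ⪯ F̄`. -/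
theorem uncertainty_removal {p m n : ℕ}
    (C : Matrix (Fin p) (Fin p) ℝ) (hC : C.IsSymm)
    (E : Matrix (Fin p) (Fin m) ℝ) (G : Matrix (Fin n) (Fin p) ℝ)
    (Fbar : Matrix (Fin n) (Fin n) ℝ) (hFbar : Fbar.PosSemidef)
    (lam : ℝ) (hlam : 0 < lam)
    (h : (-(C + lam • (E * Eᵀ) + lam⁻¹ • (Gᵀ * Fbar * G))).PosSemidef) :
    ∀ F : Matrix (Fin m) (Fin n) ℝ, (Fbar - Fᵀ * F).PosSemidef →
      (-(C + E * F * G + Gᵀ * Fᵀ * Eᵀ)).PosSemidef :=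
  uncertainty_removal_general C E G Fbar lam hlam h
end

section
/- Let λ > 0 be a real scalar, a ∈ ℝ, u ∈ ℝⁿ, and w ∈ ℝᵏ, and suppose the symmetric block matrix M = [[a, uᵀ, λ wᵀ], [u, −2λ Iₙ, 0], [λ w, 0, −2λ I_k]] of size (1+n+k) satisfies M ⪯ 0. Then for every matrix Υ ∈ ℝ^{k×n} with L2 operator norm ‖Υ‖ ≤ 1, one has a + ⟨Υ u, w⟩ ≤ 0. -/
/-!
Testing the quadratic form of `-M` at `(1, b / (2λ))`, where `b = (u, λw)` is the off-diagonal
row, gives the Schur-complement inequality `a + |u|² / (2λ) + λ|w|² / 2 ≤ 0`. Since `‖Υ‖ ≤ 1`,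
Cauchy–Schwarz gives `⟨Υu, w⟩ ≤ |u| |w|`, and AM–GM bounds `|u| |w|` by `|u|² / (2λ) + λ|w|² / 2`.
-/

open Matrix

theorem add_dotProduct_div_nonpos_of_negSemidef {m : Type*} [Fintype m] [DecidableEq m]
    {a c : ℝ} (hc : 0 < c) (b : m → ℝ)
    (h : (-fromBlocks (of fun _ _ => a) (replicateRow Unit b) (replicateCol Unit b)
      (-c • (1 : Matrix m m ℝ))).PosSemidef) :
    a + b ⬝ᵥ b / c ≤ 0 := by
  have hform := h.dotProduct_mulVec_nonneg (Sum.elim 1 (c⁻¹ • b))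
  have hcorner : (of fun _ _ => a : Matrix Unit Unit ℝ) *ᵥ 1 = fun _ => a := by
    ext; simp [mulVec]
  have hcol : replicateCol Unit b *ᵥ 1 = b := by
    ext; simp [mulVec]
  simp only [star_trivial, neg_mulVec, dotProduct_neg, fromBlocks_mulVec,
    sumElim_dotProduct_sumElim, smul_mulVec, one_mulVec, replicateRow_mulVec_eq_const,
    Sum.elim_comp_inl, Sum.elim_comp_inr, hcorner, hcol, dotProduct_add, dotProduct_smul,
    smul_dotProduct, one_dotProduct, Fintype.sum_unique, Function.const_apply, smul_eq_mul] at hform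
  have hcc : c * (c⁻¹ * (c⁻¹ * b ⬝ᵥ b)) = c⁻¹ * b ⬝ᵥ b := by field_simp
  rw [div_eq_inv_mul]
  linarith

theorem dotProduct_mulVec_le_norm_mul_norm {m n : Type*} [Fintype m] [Fintype n]
    [DecidableEq n] (Υ : Matrix m n ℝ)
    (hΥ : ‖LinearMap.toContinuousLinearMap (toEuclideanLin Υ)‖ ≤ 1) (u : n → ℝ) (w : m → ℝ) :
    Υ *ᵥ u ⬝ᵥ w ≤ ‖WithLp.toLp 2 u‖ * ‖WithLp.toLp 2 w‖ := by
  set T := LinearMap.toContinuousLinearMap (toEuclideanLin Υ)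
  have hTu : T (WithLp.toLp 2 u) = WithLp.toLp 2 (Υ *ᵥ u) := rfl
  calc Υ *ᵥ u ⬝ᵥ w = inner ℝ (T (WithLp.toLp 2 u)) (WithLp.toLp 2 w) := by
        rw [hTu, EuclideanSpace.inner_toLp_toLp, star_trivial, dotProduct_comm]
    _ ≤ ‖T (WithLp.toLp 2 u)‖ * ‖WithLp.toLp 2 w‖ := real_inner_le_norm _ _
    _ ≤ ‖WithLp.toLp 2 u‖ * ‖WithLp.toLp 2 w‖ := by
        gcongr
        exact T.le_of_opNorm_le hΥ _ |>.trans_eq (one_mul _)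

theorem norm_toLp_sq {n : Type*} [Fintype n] (u : n → ℝ) :
    ‖WithLp.toLp 2 u‖ ^ 2 = u ⬝ᵥ u := by
  rw [← real_inner_self_eq_norm_sq, EuclideanSpace.inner_toLp_toLp, star_trivial]

theorem mul_le_sq_div_add_mul_sq_div {p q l : ℝ} (hl : 0 < l) :
    p * q ≤ p ^ 2 / (2 * l) + l * q ^ 2 / 2 := by
  have hsq := sq_nonneg (p - l * q)
  field_simp
  nlinarith

/-- If the symmetric block matrix `[[a, uᵀ, λwᵀ], [u, -2λIₙ, 0], [λw, 0, -2λI_k]]`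
is negative semidefinite, then `a + ⟨Υu, w⟩ ≤ 0` for every matrix `Υ` with
L2 operator norm at most `1`. -/
theorem block_nsd_implies_inner_bound {n k : ℕ} (lam : ℝ) (hlam : 0 < lam)
    (a : ℝ) (u : Fin n → ℝ) (w : Fin k → ℝ)
    (M : Matrix (Unit ⊕ (Fin n ⊕ Fin k)) (Unit ⊕ (Fin n ⊕ Fin k)) ℝ)
    (hM : M = Matrix.fromBlocks
      (Matrix.of fun _ _ => a)
      (Matrix.of fun (_ : Unit) j => Sum.elim u (fun i => lam * w i) j)
      (Matrix.of fun (_ : Unit) j => Sum.elim u (fun i => lam * w i) j)ᵀ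
      (Matrix.fromBlocks ((-(2 * lam)) • (1 : Matrix (Fin n) (Fin n) ℝ)) 0 0
        ((-(2 * lam)) • (1 : Matrix (Fin k) (Fin k) ℝ))))
    (hnsd : (-M).PosSemidef) :
    ∀ Υ : Matrix (Fin k) (Fin n) ℝ,
      ‖LinearMap.toContinuousLinearMap (Matrix.toEuclideanLin Υ)‖ ≤ 1 →
        a + Υ.mulVec u ⬝ᵥ w ≤ 0 := by
  intro Υ hΥ
  set b : Fin n ⊕ Fin k → ℝ := Sum.elim u (fun i => lam * w i)
  have hM' : M = fromBlocks (of fun _ _ => a) (replicateRow Unit b) (replicateCol Unit b)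
      (-(2 * lam) • 1) := by
    rw [hM, ← fromBlocks_one, fromBlocks_smul, smul_zero, smul_zero, ← transpose_replicateRow]
    rfl
  have hschur := add_dotProduct_div_nonpos_of_negSemidef (by positivity) b (hM' ▸ hnsd)
  have hbb : b ⬝ᵥ b = u ⬝ᵥ u + lam ^ 2 * w ⬝ᵥ w := by
    change Sum.elim u (lam • w) ⬝ᵥ Sum.elim u (lam • w) = _
    rw [sumElim_dotProduct_sumElim, smul_dotProduct, dotProduct_smul, smul_eq_mul, smul_eq_mul]
    ring
  have hcs := dotProduct_mulVec_le_norm_mul_norm Υ hΥ u w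
  have hamgm := mul_le_sq_div_add_mul_sq_div (p := ‖WithLp.toLp 2 u‖) (q := ‖WithLp.toLp 2 w‖) hlam
  rw [norm_toLp_sq, norm_toLp_sq] at hamgm
  rw [hbb, add_div] at hschur
  have hsplit : lam ^ 2 * w ⬝ᵥ w / (2 * lam) = lam * w ⬝ᵥ w / 2 := by field_simp
  linarith
end

section
/- Let Ā ∈ ℝ^{q×q} be symmetric positive definite, let B̄ ∈ ℝ^{q×n}, and set ζ̄ := −Ā⁻¹ B̄. Then for a matrix ζ ∈ ℝ^{q×n}, the inequality B̄ᵀ Ā⁻¹ B̄ + B̄ᵀ ζ + ζᵀ B̄ + ζᵀ Ā ζ ⪯ Iₙ holds if and only if there exists a matrix Υ ∈ ℝ^{q×n} with L2 operator norm ‖Υ‖ ≤ 1 such that ζ = ζ̄ + Ā^{−1/2} Υ, where Ā^{−1/2} denotes the (unique symmetric positive definite) square root of Ā⁻¹. -/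
/-!
Completing the square, the matrix on the left is `(ζ - ζ̄)ᵀ Ā (ζ - ζ̄)`. With `R = Ā^{-1/2}` we have
`R Ā R = 1`, so the substitution `ζ - ζ̄ = R Υ` turns it into `Υᵀ Υ`, and `1 - Υᵀ Υ ⪰ 0` says
exactly that `‖Υ x‖ ≤ ‖x‖` for every `x`.
-/

open Matrix

open scoped ComplexOrder in
/-- The positive semidefinite square root of a positive semidefinite matrix
(as defined in Mathlib of December 2024, since removed). -/
noncomputable def Matrix.PosSemidef.sqrt {n : Type*} [Fintype n] [DecidableEq n]
    {𝕜 : Type*} [RCLike 𝕜] {A : Matrix n n 𝕜} (hA : A.PosSemidef) : Matrix n n 𝕜 :=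
  hA.1.eigenvectorUnitary.1 * diagonal ((↑) ∘ (√·) ∘ hA.1.eigenvalues) *
  (star hA.1.eigenvectorUnitary : Matrix n n 𝕜)

open scoped ComplexOrder InnerProductSpace

namespace Matrix.PosSemidef

variable {n 𝕜 : Type*} [Fintype n] [DecidableEq n] [RCLike 𝕜] {A : Matrix n n 𝕜}

lemma sqrt_eq_cfc (hA : A.PosSemidef) : hA.sqrt = cfc Real.sqrt A := by
  rw [hA.1.cfc_eq, IsHermitian.cfc, Unitary.conjStarAlgAut_apply]
  rfl

lemma isHermitian_sqrt (hA : A.PosSemidef) : hA.sqrt.IsHermitian := by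
  rw [sqrt_eq_cfc]
  exact cfc_predicate _ _

lemma sqrt_mul_sqrt (hA : A.PosSemidef) : hA.sqrt * hA.sqrt = A := by
  rw [sqrt_eq_cfc, ← cfc_mul Real.sqrt Real.sqrt A]
  conv_rhs => rw [← cfc_id' ℝ A hA.1.isSelfAdjoint]
  refine cfc_congr fun x hx => Real.mul_self_sqrt ?_
  rw [hA.1.spectrum_real_eq_range_eigenvalues] at hx
  obtain ⟨i, rfl⟩ := hx
  exact hA.eigenvalues_nonneg i

end Matrix.PosSemidef

namespace LinearMap

variable {𝕜 E F : Type*} [RCLike 𝕜] [NormedAddCommGroup E] [InnerProductSpace 𝕜 E]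
  [NormedAddCommGroup F] [InnerProductSpace 𝕜 F] [FiniteDimensional 𝕜 E] [FiniteDimensional 𝕜 F]

theorem isPositive_one_sub_adjoint_comp_self_iff (T : E →ₗ[𝕜] F) :
    (1 - T.adjoint ∘ₗ T).IsPositive ↔ ∀ x, ‖T x‖ ≤ ‖x‖ := by
  have hsymm : (1 - T.adjoint ∘ₗ T).IsSymmetric :=
    (isPositive_one.isSymmetric).sub (isPositive_adjoint_comp_self T).isSymmetric
  have hquad (x : E) : RCLike.re ⟪(1 - T.adjoint ∘ₗ T) x, x⟫_𝕜 = ‖x‖ ^ 2 - ‖T x‖ ^ 2 := by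
    simp [inner_sub_left, adjoint_inner_left]
  simp only [IsPositive, hsymm, true_and, hquad, sub_nonneg]
  exact forall_congr' fun x => pow_le_pow_iff_left₀ (norm_nonneg _) (norm_nonneg _) two_ne_zero

end LinearMap

theorem Matrix.norm_toEuclideanLin_le_one_iff {m n 𝕜 : Type*} [Fintype m] [Fintype n]
    [DecidableEq n] [RCLike 𝕜] (Υ : Matrix m n 𝕜) :
    ‖LinearMap.toContinuousLinearMap (toEuclideanLin Υ)‖ ≤ 1 ↔ (1 - Υᴴ * Υ).PosSemidef := by
  classical
  rw [← isPositive_toEuclideanLin_iff, map_sub, toLpLin_one, toLpLin_mul_same,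
    toEuclideanLin_conjTranspose_eq_adjoint, ← Module.End.one_eq_id,
    LinearMap.isPositive_one_sub_adjoint_comp_self_iff]
  exact ContinuousLinearMap.opNorm_le_iff zero_le_one |>.trans <| by simp

namespace Matrix

variable {m n α : Type*} [Fintype m] [DecidableEq m] [CommRing α]

theorem transpose_mul_mul_add_inv_mul {A : Matrix m m α} (hAT : Aᵀ = A) (hA : IsUnit A.det)
    (B ζ : Matrix m n α) :
    (A⁻¹ * B + ζ)ᵀ * A * (A⁻¹ * B + ζ)
      = Bᵀ * A⁻¹ * B + Bᵀ * ζ + ζᵀ * B + ζᵀ * A * ζ := by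
  simp only [transpose_add, transpose_mul, transpose_nonsing_inv, hAT, Matrix.add_mul,
    Matrix.mul_add, Matrix.mul_assoc, mul_nonsing_inv_cancel_left _ _ hA,
    nonsing_inv_mul_cancel_left _ _ hA]
  abel

theorem mul_mul_eq_one_of_mul_self_eq_inv {A R : Matrix m m α} (hA : IsUnit A.det)
    (hR : R * R = A⁻¹) : R * A * R = 1 :=
  mul_eq_one_comm.mp <| by rw [← Matrix.mul_assoc, hR, nonsing_inv_mul _ hA]

end Matrix

/-- Parametrization of the matrix ellipsoid: for `Ā ≻ 0` and `ζ̄ = -Ā⁻¹B̄`,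
`B̄ᵀĀ⁻¹B̄ + B̄ᵀζ + ζᵀB̄ + ζᵀĀζ ⪯ I` iff `ζ = ζ̄ + Ā^{-1/2} Υ` for some `Υ`
of L2 operator norm at most `1`. -/
theorem ellipsoid_parametrization {q n : ℕ}
    (Abar : Matrix (Fin q) (Fin q) ℝ) (hA : Abar.PosDef)
    (Bbar : Matrix (Fin q) (Fin n) ℝ)
    (ζbar : Matrix (Fin q) (Fin n) ℝ) (hζbar : ζbar = -(Abar⁻¹ * Bbar))
    (ζ : Matrix (Fin q) (Fin n) ℝ) :
    ((1 : Matrix (Fin n) (Fin n) ℝ)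
        - (Bbarᵀ * Abar⁻¹ * Bbar + Bbarᵀ * ζ + ζᵀ * Bbar + ζᵀ * Abar * ζ)).PosSemidef
      ↔ ∃ Υ : Matrix (Fin q) (Fin n) ℝ,
          ‖LinearMap.toContinuousLinearMap (Matrix.toEuclideanLin Υ)‖ ≤ 1 ∧
          ζ = ζbar + hA.inv.posSemidef.sqrt * Υ := by
  have hAT : Abarᵀ = Abar := hA.isHermitian
  have hdet : IsUnit Abar.det := hA.det_pos.ne'.isUnit
  set R := hA.inv.posSemidef.sqrt
  have hRT : Rᵀ = R := hA.inv.posSemidef.isHermitian_sqrt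
  have hRAR : R * Abar * R = 1 :=
    mul_mul_eq_one_of_mul_self_eq_inv hdet hA.inv.posSemidef.sqrt_mul_sqrt
  have hRdet : IsUnit R.det :=
    isUnit_det_of_right_inverse (B := Abar * R) (by rw [← Matrix.mul_assoc, hRAR])
  have hquad (Υ : Matrix (Fin q) (Fin n) ℝ) : (R * Υ)ᵀ * Abar * (R * Υ) = Υᵀ * Υ := by
    calc (R * Υ)ᵀ * Abar * (R * Υ) = Υᵀ * (R * Abar * R) * Υ := by
          simp only [transpose_mul, hRT, Matrix.mul_assoc]
      _ = Υᵀ * Υ := by rw [hRAR, Matrix.mul_one]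
  simp_rw [norm_toEuclideanLin_le_one_iff, conjTranspose_eq_transpose_of_trivial, hζbar,
    eq_neg_add_iff_add_eq, ← transpose_mul_mul_add_inv_mul hAT hdet]
  constructor
  · intro h
    refine ⟨R⁻¹ * (Abar⁻¹ * Bbar + ζ), ?_, (mul_nonsing_inv_cancel_left _ _ hRdet).symm⟩
    rwa [← hquad, mul_nonsing_inv_cancel_left _ _ hRdet]
  · rintro ⟨Υ, hΥ, hζ⟩
    rwa [hζ, hquad]
end
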